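/- arXiv:1110.2563 — 2 statements merged into one kernel-verified Lean document; each statement's English description precedes it below -/
import Mathlib

section
/- Let σ > 0, t > 0, Δ ≥ 0, μ ≥ 0, and let ε be a real random variable with law N(0, σ²). Define f_{t,Δ}(z, μ) = | −max(−(z+t),0) − μ | · 1{z < 0} + | max(z − t − Δ, 0) − μ | · 1{z > 0}. Then E[ f_{t,Δ}(ε + μ, μ)² ] ≤ min{ 2E(ε − t)₊² + μ², σ² + (t + Δ)² }. -/
/-!
Write `z = x + μ` with `x ~ N(0, σ²)`. Case by case in the sign of `z` one checks the pointwise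
bounds `f_{t,Δ}(z, μ) ≤ |x - (t + Δ)|` and `f_{t,Δ}(z, μ) ≤ max((x - t)₊, (-x - t)₊, |μ|)`.
Squaring and integrating, the first gives `σ² + (t + Δ)²`; the second gives
`E(x - t)₊² + E(-x - t)₊² + μ²`, and the two expectations agree because `N(0, σ²)` is symmetric.
-/

open MeasureTheory ProbabilityTheory
open scoped NNReal

section Gaussian

variable (m : ℝ) (v : ℝ≥0)

lemma integral_sq_gaussianReal : ∫ x, x ^ 2 ∂gaussianReal m v = v + m ^ 2 := by
  have h := variance_eq_sub (memLp_id_gaussianReal' (μ := m) (v := v) 2 (by norm_num))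
  simp only [variance_id_gaussianReal, Pi.pow_apply, id, integral_id_gaussianReal] at h
  linarith

lemma integral_sub_sq_gaussianReal (c : ℝ) :
    ∫ x, (x - c) ^ 2 ∂gaussianReal m v = v + (m - c) ^ 2 := by
  rw [← integral_sq_gaussianReal, ← gaussianReal_map_sub_const,
    integral_map (by fun_prop) (by fun_prop)]

lemma integral_comp_neg_gaussianReal {g : ℝ → ℝ} (hg : Measurable g) :
    ∫ x, g (-x) ∂gaussianReal m v = ∫ x, g x ∂gaussianReal (-m) v := by
  rw [← gaussianReal_map_neg, integral_map (by fun_prop) hg.aestronglyMeasurable]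

end Gaussian

lemma MeasureTheory.MemLp.integrable_max_zero_sq {α : Type*} [MeasurableSpace α]
    {μ : Measure α} {g : α → ℝ} (hg : MemLp g 2 μ) :
    Integrable (fun x => max (g x) 0 ^ 2) μ := by
  refine hg.integrable_sq.mono' ((hg.1.sup aestronglyMeasurable_const).pow 2)
    (ae_of_all _ fun x => ?_)
  rw [Real.norm_eq_abs, abs_sq]
  rcases le_total (g x) 0 with h | h <;> simp [h, sq_nonneg]

noncomputable def fTDelta (t Δ z m : ℝ) : ℝ :=
  (if z < 0 then |(-(max (-(z + t)) 0)) - m| else 0)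
    + (if 0 < z then |max (z - t - Δ) 0 - m| else 0)

lemma fTDelta_nonneg (t Δ z m : ℝ) : 0 ≤ fTDelta t Δ z m := by
  unfold fTDelta
  positivity

section Pointwise

variable {t Δ μ : ℝ}

lemma fTDelta_le_abs_sub (ht : 0 ≤ t) (hΔ : 0 ≤ Δ) (hμ : 0 ≤ μ) (x : ℝ) :
    fTDelta t Δ (x + μ) μ ≤ |x - (t + Δ)| := by
  unfold fTDelta
  grind

lemma fTDelta_le_max (hΔ : 0 ≤ Δ) (x : ℝ) :
    fTDelta t Δ (x + μ) μ ≤ max (max (x - t) 0) (max (max (-x - t) 0) |μ|) := by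
  unfold fTDelta
  grind

lemma fTDelta_sq_le_sub_sq (ht : 0 ≤ t) (hΔ : 0 ≤ Δ) (hμ : 0 ≤ μ) (x : ℝ) :
    fTDelta t Δ (x + μ) μ ^ 2 ≤ (x - (t + Δ)) ^ 2 := by
  simpa only [sq_abs] using
    pow_le_pow_left₀ (fTDelta_nonneg ..) (fTDelta_le_abs_sub ht hΔ hμ x) 2

lemma fTDelta_sq_le_max_sq_add (hΔ : 0 ≤ Δ) (x : ℝ) :
    fTDelta t Δ (x + μ) μ ^ 2 ≤ max (x - t) 0 ^ 2 + max (-x - t) 0 ^ 2 + μ ^ 2 := by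
  have hF := fTDelta_nonneg t Δ (x + μ) μ
  have ha := le_max_right (x - t) 0
  have hb := le_max_right (-x - t) 0
  rcases le_max_iff.1 (fTDelta_le_max hΔ x) with h | h
  · nlinarith [pow_le_pow_left₀ hF h 2]
  rcases le_max_iff.1 h with h | h
  · nlinarith [pow_le_pow_left₀ hF h 2]
  · nlinarith [pow_le_pow_left₀ hF h 2, sq_abs μ]

end Pointwise

section Integrated

variable {t Δ μ : ℝ} (v : ℝ≥0)

lemma integral_fTDelta_sq_le_sub_sq (m : ℝ) (ht : 0 ≤ t) (hΔ : 0 ≤ Δ) (hμ : 0 ≤ μ) :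
    ∫ x, fTDelta t Δ (x + μ) μ ^ 2 ∂gaussianReal m v ≤ v + (m - (t + Δ)) ^ 2 := by
  have hX : MemLp (fun x : ℝ => x) 2 (gaussianReal m v) := memLp_id_gaussianReal' 2 (by norm_num)
  calc ∫ x, fTDelta t Δ (x + μ) μ ^ 2 ∂gaussianReal m v
      ≤ ∫ x, (x - (t + Δ)) ^ 2 ∂gaussianReal m v :=
        integral_mono_of_nonneg (ae_of_all _ fun _ => sq_nonneg _)
          (hX.sub (memLp_const _)).integrable_sq (ae_of_all _ (fTDelta_sq_le_sub_sq ht hΔ hμ))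
    _ = v + (m - (t + Δ)) ^ 2 := integral_sub_sq_gaussianReal m v _

lemma integral_fTDelta_sq_le_max_sq (hΔ : 0 ≤ Δ) :
    ∫ x, fTDelta t Δ (x + μ) μ ^ 2 ∂gaussianReal 0 v
      ≤ 2 * ∫ x, max (x - t) 0 ^ 2 ∂gaussianReal 0 v + μ ^ 2 := by
  have hX : MemLp (fun x : ℝ => x) 2 (gaussianReal 0 v) := memLp_id_gaussianReal' 2 (by norm_num)
  have hpos : Integrable (fun x => max (x - t) 0 ^ 2) (gaussianReal 0 v) :=
    (hX.sub (memLp_const t)).integrable_max_zero_sq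
  have hneg : Integrable (fun x => max (-x - t) 0 ^ 2) (gaussianReal 0 v) :=
    (hX.neg.sub (memLp_const t)).integrable_max_zero_sq
  calc ∫ x, fTDelta t Δ (x + μ) μ ^ 2 ∂gaussianReal 0 v
      ≤ ∫ x, (max (x - t) 0 ^ 2 + max (-x - t) 0 ^ 2 + μ ^ 2) ∂gaussianReal 0 v :=
        integral_mono_of_nonneg (ae_of_all _ fun _ => sq_nonneg _)
          ((hpos.add hneg).add (integrable_const _)) (ae_of_all _ (fTDelta_sq_le_max_sq_add hΔ))
    _ = ∫ x, max (x - t) 0 ^ 2 ∂gaussianReal 0 v + ∫ x, max (-x - t) 0 ^ 2 ∂gaussianReal 0 v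
          + μ ^ 2 := by
        have hsum : Integrable (fun x => max (x - t) 0 ^ 2 + max (-x - t) 0 ^ 2)
            (gaussianReal 0 v) := hpos.add hneg
        rw [integral_add hsum (integrable_const _), integral_add hpos hneg]
        simp
    _ = 2 * ∫ x, max (x - t) 0 ^ 2 ∂gaussianReal 0 v + μ ^ 2 := by
        rw [integral_comp_neg_gaussianReal 0 v (g := fun x => max (x - t) 0 ^ 2) (by fun_prop),
          neg_zero]
        ring

end Integrated

theorem f_tDelta_second_moment_bound_general (σ t Δ μ : ℝ)
    (ht : 0 < t) (hΔ : 0 ≤ Δ) (hμ : 0 ≤ μ)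
    (f : ℝ → ℝ → ℝ)
    (hf : ∀ zz m, f zz m =
      (if zz < 0 then |(-(max (-(zz + t)) 0)) - m| else 0)
        + (if 0 < zz then |max (zz - t - Δ) 0 - m| else 0)) :
    (∫ x, (f (x + μ) μ) ^ 2 ∂(gaussianReal 0 ⟨σ ^ 2, sq_nonneg σ⟩)) ≤
      min (2 * (∫ x, (max (x - t) 0) ^ 2 ∂(gaussianReal 0 ⟨σ ^ 2, sq_nonneg σ⟩)) + μ ^ 2)
          (σ ^ 2 + (t + Δ) ^ 2) := by
  obtain rfl : f = fTDelta t Δ := funext fun z => funext (hf z)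
  refine le_min (integral_fTDelta_sq_le_max_sq _ hΔ) ?_
  refine (integral_fTDelta_sq_le_sub_sq _ 0 ht.le hΔ hμ).trans_eq ?_
  rw [zero_sub, neg_sq]
  rfl

/-- second-moment bound for the auxiliary function `f_{t,Δ}` at a shifted
Gaussian: `E[f_{t,Δ}(ε+μ, μ)²] ≤ min{2E(ε-t)₊² + μ², σ² + (t+Δ)²}`. -/
theorem f_tDelta_second_moment_bound (σ t Δ μ : ℝ)
    (hσ : 0 < σ) (ht : 0 < t) (hΔ : 0 ≤ Δ) (hμ : 0 ≤ μ)
    (f : ℝ → ℝ → ℝ)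
    (hf : ∀ zz m, f zz m =
      (if zz < 0 then |(-(max (-(zz + t)) 0)) - m| else 0)
        + (if 0 < zz then |max (zz - t - Δ) 0 - m| else 0)) :
    (∫ x, (f (x + μ) μ) ^ 2 ∂(gaussianReal 0 ⟨σ ^ 2, sq_nonneg σ⟩)) ≤
      min (2 * (∫ x, (max (x - t) 0) ^ 2 ∂(gaussianReal 0 ⟨σ ^ 2, sq_nonneg σ⟩)) + μ ^ 2)
          (σ ^ 2 + (t + Δ) ^ 2) :=
  f_tDelta_second_moment_bound_general σ t Δ μ ht hΔ hμ f hf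
end

section
/- Let X be an n×p real matrix with columns x_1,…,x_p, let ξ > 0, λ₁ > 0, s ≥ 1, and 0 < c_* ≤ c*. Let Σ̂ be the thresholded Gram matrix Σ̂_{jk} = (x_j^T x_k/n)·1{|x_j^T x_k/n| ≥ λ₁}, and suppose its smallest eigenvalue is at least c_*, its largest eigenvalue is at most c*, and, with K = 2ξ²(c*/c_* + 1/2), both s λ₁ (1 + ξ)² ≤ c_*/2 and s λ₁ (1 + K) + λ₁ ≤ c_*/2 hold. Then for every S ⊆ {1,…,p} with 1 ≤ |S| ≤ s and m the smallest integer with m ≥ K|S|: the sparse eigenvalues satisfy φ₋(m,S) ≥ c_*/2 and φ₊(m,S) ≤ c* + c_*/2, and consequently ξ² φ₊(m,S) / κ²(ξ,S) ≤ K. -/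
/-!
The Gram matrix `XᵀX/n` and its hard-thresholded version `Σ̂` differ entrywise by at most `λ₁`,
so their quadratic forms differ by at most `λ₁ ‖u‖₁²`. For `u` supported on `N` coordinates
`‖u‖₁² ≤ N ‖u‖₂²`, and on the cone `C(ξ,S)` we have `‖u‖₁ ≤ (1 + ξ) ‖u_S‖₁` and
`‖u_S‖₁² ≤ |S| ‖u‖₂²`. The two conditions on `s λ₁` make the error at most `c_*/2` in each case,
which turns the eigenvalue bounds of `Σ̂` into `φ₋ ≥ c_*/2`, `φ₊ ≤ c* + c_*/2` and
`κ² ≥ c_*/2`; finally `ξ² (c* + c_*/2) / (c_*/2) = K`.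
-/

open Finset

/-- The compatibility factor `κ(ξ,S)` of a design matrix `X`. -/
noncomputable def compatFactor (n p : ℕ) (X : Matrix (Fin n) (Fin p) ℝ) (ξ : ℝ)
    (S : Finset (Fin p)) : ℝ :=
  sInf { r : ℝ | ∃ u : Fin p → ℝ,
    (∑ k ∈ Sᶜ, |u k|) ≤ ξ * (∑ k ∈ S, |u k|) ∧ (∑ k ∈ S, |u k|) ≠ 0 ∧
    r = Real.sqrt (∑ i, (∑ k, X i k * u k) ^ 2) * Real.sqrt S.card /
        (Real.sqrt n * ∑ k ∈ S, |u k|) }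

/-- The lower sparse eigenvalue `φ₋(m,S)`: the minimum over `B ⊇ S` with `|B∖S| ≤ m`
of the smallest eigenvalue of `X_Bᵀ X_B / n`, expressed via Rayleigh quotients. -/
noncomputable def phiMinus (n p : ℕ) (X : Matrix (Fin n) (Fin p) ℝ) (m : ℕ)
    (S : Finset (Fin p)) : ℝ :=
  sInf { r : ℝ | ∃ B : Finset (Fin p), S ⊆ B ∧ (B \ S).card ≤ m ∧
    ∃ u : Fin p → ℝ, (∀ k, k ∉ B → u k = 0) ∧ u ≠ 0 ∧
      r = (∑ i, (∑ k, X i k * u k) ^ 2) / (n * ∑ k, (u k) ^ 2) }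

/-- The upper sparse eigenvalue `φ₊(m,S)`: the maximum over `B` with `B ∩ S = ∅` and
`|B| ≤ m` of the largest eigenvalue of `X_Bᵀ X_B / n`, expressed via Rayleigh quotients. -/
noncomputable def phiPlus (n p : ℕ) (X : Matrix (Fin n) (Fin p) ℝ) (m : ℕ)
    (S : Finset (Fin p)) : ℝ :=
  sSup { r : ℝ | ∃ B : Finset (Fin p), Disjoint B S ∧ B.card ≤ m ∧
    ∃ u : Fin p → ℝ, (∀ k, k ∉ B → u k = 0) ∧ u ≠ 0 ∧
      r = (∑ i, (∑ k, X i k * u k) ^ 2) / (n * ∑ k, (u k) ^ 2) }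

open Matrix

noncomputable def hardThreshold (t x : ℝ) : ℝ := if t ≤ |x| then x else 0

lemma abs_sub_hardThreshold_le {t : ℝ} (ht : 0 ≤ t) (x : ℝ) : |x - hardThreshold t x| ≤ t := by
  unfold hardThreshold
  split_ifs with h
  · simpa using ht
  · simpa using (not_le.mp h).le

section QuadraticForm

variable {ι : Type*} [Fintype ι]

lemma sum_sq_pos_of_ne_zero {u : ι → ℝ} (hu : u ≠ 0) : 0 < ∑ k, u k ^ 2 := by
  simpa [dotProduct, sq] using dotProduct_self_star_pos_iff.2 hu

lemma sum_sum_mul_mul_eq_dotProduct_mulVec (A : Matrix ι ι ℝ) (u : ι → ℝ) :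
    ∑ j, ∑ k, u j * A j k * u k = u ⬝ᵥ A *ᵥ u := by
  simp only [dotProduct, mulVec, Finset.mul_sum, mul_assoc]

lemma abs_dotProduct_mulVec_le {M : Matrix ι ι ℝ} {ε : ℝ} (hM : ∀ j k, |M j k| ≤ ε)
    (u : ι → ℝ) : |u ⬝ᵥ M *ᵥ u| ≤ ε * (∑ j, |u j|) ^ 2 := by
  rw [← sum_sum_mul_mul_eq_dotProduct_mulVec]
  calc |∑ j, ∑ k, u j * M j k * u k|
      ≤ ∑ j, ∑ k, |u j| * ε * |u k| := by
        refine (abs_sum_le_sum_abs _ _).trans (sum_le_sum fun j _ => ?_)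
        refine (abs_sum_le_sum_abs _ _).trans (sum_le_sum fun k _ => ?_)
        rw [abs_mul, abs_mul]
        gcongr
        exact hM j k
    _ = ε * (∑ j, |u j|) ^ 2 := by
        rw [sq, sum_mul_sum, mul_sum]
        refine sum_congr rfl fun j _ => ?_
        rw [mul_sum]
        exact sum_congr rfl fun k _ => by ring

lemma abs_dotProduct_mulVec_sub_le {A M : Matrix ι ι ℝ} {ε : ℝ}
    (hAM : ∀ j k, |A j k - M j k| ≤ ε) (u : ι → ℝ) :
    |u ⬝ᵥ A *ᵥ u - u ⬝ᵥ M *ᵥ u| ≤ ε * (∑ j, |u j|) ^ 2 := by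
  rw [← dotProduct_sub, ← sub_mulVec]
  exact abs_dotProduct_mulVec_le hAM u

lemma sq_sum_abs_le_card_mul_sum_sq {B : Finset ι} {u : ι → ℝ} (hu : ∀ k, k ∉ B → u k = 0) :
    (∑ j, |u j|) ^ 2 ≤ B.card * ∑ j, u j ^ 2 := by
  rw [← sum_subset (subset_univ B) fun k _ hk => by rw [hu k hk, abs_zero],
    ← sum_subset (subset_univ B) fun k _ hk => by rw [hu k hk, zero_pow two_ne_zero]]
  simpa only [sq_abs] using sq_sum_le_card_mul_sum_sq (s := B) (f := fun j => |u j|)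

variable {A M : Matrix ι ι ℝ} {ε δ c C : ℝ}

lemma mul_sq_sum_abs_le_mul_sum_sq (hε : 0 ≤ ε) {B : Finset ι} (hB : ε * B.card ≤ δ)
    {u : ι → ℝ} (hu : ∀ k, k ∉ B → u k = 0) :
    ε * (∑ j, |u j|) ^ 2 ≤ δ * ∑ j, u j ^ 2 :=
  calc ε * (∑ j, |u j|) ^ 2 ≤ ε * (B.card * ∑ j, u j ^ 2) := by
        gcongr; exact sq_sum_abs_le_card_mul_sum_sq hu
    _ ≤ δ * ∑ j, u j ^ 2 := by rw [← mul_assoc]; gcongr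

lemma sub_mul_sum_sq_le_dotProduct_mulVec (hM : ∀ u, c * ∑ j, u j ^ 2 ≤ u ⬝ᵥ M *ᵥ u)
    (hAM : ∀ j k, |A j k - M j k| ≤ ε) (hε : 0 ≤ ε) {B : Finset ι} (hB : ε * B.card ≤ δ)
    {u : ι → ℝ} (hu : ∀ k, k ∉ B → u k = 0) :
    (c - δ) * ∑ j, u j ^ 2 ≤ u ⬝ᵥ A *ᵥ u := by
  linarith [hM u, (abs_le.mp (abs_dotProduct_mulVec_sub_le hAM u)).1,
    mul_sq_sum_abs_le_mul_sum_sq hε hB hu]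

lemma dotProduct_mulVec_le_add_mul_sum_sq (hM : ∀ u, u ⬝ᵥ M *ᵥ u ≤ C * ∑ j, u j ^ 2)
    (hAM : ∀ j k, |A j k - M j k| ≤ ε) (hε : 0 ≤ ε) {B : Finset ι} (hB : ε * B.card ≤ δ)
    {u : ι → ℝ} (hu : ∀ k, k ∉ B → u k = 0) :
    u ⬝ᵥ A *ᵥ u ≤ (C + δ) * ∑ j, u j ^ 2 := by
  linarith [hM u, (abs_le.mp (abs_dotProduct_mulVec_sub_le hAM u)).2,
    mul_sq_sum_abs_le_mul_sum_sq hε hB hu]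

lemma sub_mul_sq_le_dotProduct_mulVec_mul_card [DecidableEq ι]
    (hM : ∀ u, c * ∑ j, u j ^ 2 ≤ u ⬝ᵥ M *ᵥ u) (hc : 0 ≤ c)
    (hAM : ∀ j k, |A j k - M j k| ≤ ε) (hε : 0 ≤ ε) {S : Finset ι} {ξ : ℝ}
    (hS : ε * (1 + ξ) ^ 2 * S.card ≤ δ) {u : ι → ℝ}
    (hcone : ∑ k ∈ Sᶜ, |u k| ≤ ξ * ∑ k ∈ S, |u k|) :
    (c - δ) * (∑ k ∈ S, |u k|) ^ 2 ≤ (u ⬝ᵥ A *ᵥ u) * S.card := by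
  set L := ∑ k ∈ S, |u k|
  have hclose := (abs_le.mp (abs_dotProduct_mulVec_sub_le hAM u)).1
  have hl1_cone : (∑ j, |u j|) ^ 2 ≤ (1 + ξ) ^ 2 * L ^ 2 := by
    rw [← mul_pow]
    refine pow_le_pow_left₀ (sum_nonneg fun j _ => abs_nonneg _) ?_ 2
    rw [← sum_add_sum_compl S]
    linarith
  have hL_card : L ^ 2 ≤ S.card * ∑ j, u j ^ 2 :=
    calc L ^ 2 ≤ S.card * ∑ j ∈ S, u j ^ 2 := by
          simpa only [sq_abs] using sq_sum_le_card_mul_sum_sq (s := S) (f := fun j => |u j|)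
      _ ≤ S.card * ∑ j, u j ^ 2 := mul_le_mul_of_nonneg_left
          (sum_le_sum_of_subset_of_nonneg (subset_univ S) fun j _ _ => sq_nonneg _)
          S.card.cast_nonneg
  calc (c - δ) * L ^ 2
      ≤ c * (S.card * ∑ j, u j ^ 2) - ε * (1 + ξ) ^ 2 * S.card * L ^ 2 := by
        nlinarith [mul_le_mul_of_nonneg_left hL_card hc,
          mul_le_mul_of_nonneg_right hS (sq_nonneg L)]
    _ ≤ (u ⬝ᵥ A *ᵥ u) * S.card := by
        nlinarith [hM u, mul_le_mul_of_nonneg_left hl1_cone hε, (S.card.cast_nonneg : (0 : ℝ) ≤ _)]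

end QuadraticForm

section Gram

variable {n : ℕ} {ι : Type*}

noncomputable def sampleGram (X : Matrix (Fin n) ι ℝ) : Matrix ι ι ℝ := (n : ℝ)⁻¹ • (Xᵀ * X)

lemma sampleGram_apply (X : Matrix (Fin n) ι ℝ) (j k : ι) :
    sampleGram X j k = (∑ i, X i j * X i k) / n := by
  simp [sampleGram, mul_apply, div_eq_inv_mul]

variable [Fintype ι]

lemma sum_sq_mulVec_eq_mul_sampleGram (hn : n ≠ 0) (X : Matrix (Fin n) ι ℝ) (u : ι → ℝ) :
    ∑ i, (∑ k, X i k * u k) ^ 2 = n * (u ⬝ᵥ sampleGram X *ᵥ u) := by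
  rw [sampleGram, smul_mulVec, dotProduct_smul, smul_eq_mul, ← mul_assoc,
    mul_inv_cancel₀ (Nat.cast_ne_zero.mpr hn), one_mul, ← mulVec_mulVec, dotProduct_mulVec,
    vecMul_transpose]
  simp only [dotProduct, mulVec, sq]

lemma rayleigh_eq_sampleGram (hn : n ≠ 0) (X : Matrix (Fin n) ι ℝ) (u : ι → ℝ) :
    (∑ i, (∑ k, X i k * u k) ^ 2) / (n * ∑ k, u k ^ 2) =
      (u ⬝ᵥ sampleGram X *ᵥ u) / ∑ k, u k ^ 2 := by
  rw [sum_sq_mulVec_eq_mul_sampleGram hn, mul_div_mul_left _ _ (Nat.cast_ne_zero.mpr hn)]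

end Gram

section SparseEigenvalues

variable {n p m : ℕ} {X : Matrix (Fin n) (Fin p) ℝ} {S : Finset (Fin p)} {c : ℝ}

lemma le_phiMinus (hn : n ≠ 0) (hS : S.Nonempty)
    (h : ∀ (B : Finset (Fin p)) (u : Fin p → ℝ), S ⊆ B → (B \ S).card ≤ m →
      (∀ k, k ∉ B → u k = 0) → c * ∑ k, u k ^ 2 ≤ u ⬝ᵥ sampleGram X *ᵥ u) :
    c ≤ phiMinus n p X m S := by
  obtain ⟨j, hj⟩ := hS
  refine le_csInf ⟨_, S, subset_refl S, by simp, Pi.single j 1,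
    fun k hk => Pi.single_eq_of_ne (ne_of_mem_of_not_mem hj hk).symm 1,
    Pi.single_ne_zero_iff.2 one_ne_zero, rfl⟩ ?_
  rintro r ⟨B, hSB, hBS, u, hu, hu0, rfl⟩
  rw [rayleigh_eq_sampleGram hn]
  exact (le_div_iff₀ (sum_sq_pos_of_ne_zero hu0)).mpr (h B u hSB hBS hu)

lemma phiPlus_le (hn : n ≠ 0) (hc : 0 ≤ c)
    (h : ∀ (B : Finset (Fin p)) (u : Fin p → ℝ), Disjoint B S → B.card ≤ m →
      (∀ k, k ∉ B → u k = 0) → u ⬝ᵥ sampleGram X *ᵥ u ≤ c * ∑ k, u k ^ 2) :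
    phiPlus n p X m S ≤ c := by
  refine Real.sSup_le ?_ hc
  rintro r ⟨B, hBS, hBm, u, hu, hu0, rfl⟩
  rw [rayleigh_eq_sampleGram hn]
  exact (div_le_iff₀ (sum_sq_pos_of_ne_zero hu0)).mpr (h B u hBS hBm hu)

lemma le_sq_compatFactor (hn : n ≠ 0) {ξ : ℝ} (hξ : 0 ≤ ξ) (hS : S.Nonempty) (hc : 0 ≤ c)
    (h : ∀ u : Fin p → ℝ, ∑ k ∈ Sᶜ, |u k| ≤ ξ * ∑ k ∈ S, |u k| →
      c * (∑ k ∈ S, |u k|) ^ 2 ≤ (u ⬝ᵥ sampleGram X *ᵥ u) * S.card) :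
    c ≤ compatFactor n p X ξ S ^ 2 := by
  obtain ⟨j, hj⟩ := hS
  have hsqrt : √c ≤ compatFactor n p X ξ S := by
    refine le_csInf ⟨_, Pi.single j 1, ?_, ?_, rfl⟩ ?_
    · simp [Pi.single_apply, apply_ite (abs : ℝ → ℝ), hj, hξ]
    · simp [Pi.single_apply, apply_ite (abs : ℝ → ℝ), hj]
    rintro r ⟨u, hcone, hL, rfl⟩
    have hLpos : 0 < ∑ k ∈ S, |u k| :=
      lt_of_le_of_ne (sum_nonneg fun k _ => abs_nonneg _) (Ne.symm hL)
    rw [sum_sq_mulVec_eq_mul_sampleGram hn, Real.sqrt_mul (Nat.cast_nonneg n), mul_assoc,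
      mul_div_mul_left _ _ (Real.sqrt_ne_zero'.2 (Nat.cast_pos.2 (Nat.pos_of_ne_zero hn))),
      ← Real.sqrt_mul' _ (Nat.cast_nonneg _), le_div_iff₀ hLpos, ← Real.sqrt_sq hLpos.le,
      ← Real.sqrt_mul hc]
    exact Real.sqrt_le_sqrt (h u hcone)
  exact (Real.sqrt_le_left (hsqrt.trans' (Real.sqrt_nonneg c))).1 hsqrt

end SparseEigenvalues

theorem sparse_eigenvalues_from_thresholded_gram_general
    (n p : ℕ) (hn : 0 < n)
    (X : Matrix (Fin n) (Fin p) ℝ)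
    (ξ lam₁ s cstar cupper : ℝ)
    (hξ : 0 < ξ) (hlam₁ : 0 < lam₁) (hcstar : 0 < cstar) (hcc : cstar ≤ cupper)
    (Sighat : Matrix (Fin p) (Fin p) ℝ)
    (hSighat : ∀ j k : Fin p, Sighat j k =
      if lam₁ ≤ |(∑ i, X i j * X i k) / n| then (∑ i, X i j * X i k) / n else 0)
    (heigLower : ∀ u : Fin p → ℝ,
      cstar * (∑ j, (u j) ^ 2) ≤ ∑ j, ∑ k, u j * Sighat j k * u k)
    (heigUpper : ∀ u : Fin p → ℝ,
      (∑ j, ∑ k, u j * Sighat j k * u k) ≤ cupper * ∑ j, (u j) ^ 2)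
    (K : ℝ) (hK : K = 2 * ξ ^ 2 * (cupper / cstar + 1 / 2))
    (hcond₁ : s * lam₁ * (1 + ξ) ^ 2 ≤ cstar / 2)
    (hcond₂ : s * lam₁ * (1 + K) + lam₁ ≤ cstar / 2)
    (S : Finset (Fin p)) (hS : S.Nonempty) (hScard : (S.card : ℝ) ≤ s)
    (m : ℕ) (hm : m = ⌈K * (S.card : ℝ)⌉₊) :
    cstar / 2 ≤ phiMinus n p X m S ∧
    phiPlus n p X m S ≤ cupper + cstar / 2 ∧
    ξ ^ 2 * phiPlus n p X m S / (compatFactor n p X ξ S) ^ 2 ≤ K := by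
  have hclose : ∀ j k, |sampleGram X j k - Sighat j k| ≤ lam₁ := fun j k => by
    rw [hSighat, sampleGram_apply]
    exact abs_sub_hardThreshold_le hlam₁.le _
  have hlow : ∀ u, cstar * ∑ j, u j ^ 2 ≤ u ⬝ᵥ Sighat *ᵥ u := fun u =>
    sum_sum_mul_mul_eq_dotProduct_mulVec Sighat u ▸ heigLower u
  have hup : ∀ u, u ⬝ᵥ Sighat *ᵥ u ≤ cupper * ∑ j, u j ^ 2 := fun u =>
    sum_sum_mul_mul_eq_dotProduct_mulVec Sighat u ▸ heigUpper u
  have hK₀ : 0 ≤ K := hK ▸ by have := (one_le_div hcstar).2 hcc; positivity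
  have hsparse : ∀ B : Finset (Fin p), B.card ≤ S.card + m → lam₁ * B.card ≤ cstar / 2 := by
    intro B hB
    have hm' : (m : ℝ) ≤ K * S.card + 1 := hm ▸ (Nat.ceil_lt_add_one (by positivity)).le
    have hBs : (B.card : ℝ) ≤ s * (1 + K) + 1 :=
      calc (B.card : ℝ) ≤ S.card + m := by exact_mod_cast hB
        _ ≤ S.card * (1 + K) + 1 := by linarith
        _ ≤ s * (1 + K) + 1 := by gcongr
    calc lam₁ * B.card ≤ lam₁ * (s * (1 + K) + 1) := by gcongr
      _ ≤ cstar / 2 := by linarith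
  have hphiMinus : cstar / 2 ≤ phiMinus n p X m S :=
    le_phiMinus hn.ne' hS fun B u hSB hBS hu => sub_half cstar ▸
      sub_mul_sum_sq_le_dotProduct_mulVec hlow hclose hlam₁.le
        (hsparse B (by have := card_sdiff_add_card_eq_card hSB; omega)) hu
  have hphiPlus : phiPlus n p X m S ≤ cupper + cstar / 2 :=
    phiPlus_le hn.ne' (by linarith) fun B u _ hBm hu =>
      dotProduct_mulVec_le_add_mul_sum_sq hup hclose hlam₁.le (hsparse B (by omega)) hu
  have hcompat : cstar / 2 ≤ compatFactor n p X ξ S ^ 2 :=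
    le_sq_compatFactor hn.ne' hξ.le hS (by positivity) fun u hcone => sub_half cstar ▸
      sub_mul_sq_le_dotProduct_mulVec_mul_card hlow hcstar.le hclose hlam₁.le
        ((mul_le_mul_of_nonneg_left hScard (by positivity)).trans (by linarith)) hcone
  refine ⟨hphiMinus, hphiPlus, ?_⟩
  calc ξ ^ 2 * phiPlus n p X m S / compatFactor n p X ξ S ^ 2
      ≤ ξ ^ 2 * (cupper + cstar / 2) / (cstar / 2) := by
        gcongr
        exact mul_nonneg (sq_nonneg ξ) (by linarith)
    _ = K := by rw [hK]; field_simp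

/-- sparse eigenvalue bounds via the thresholded Gram matrix
(second part of Proposition 2). -/
theorem sparse_eigenvalues_from_thresholded_gram
    (n p : ℕ) (hn : 0 < n)
    (X : Matrix (Fin n) (Fin p) ℝ)
    (ξ lam₁ s cstar cupper : ℝ)
    (hξ : 0 < ξ) (hlam₁ : 0 < lam₁) (hs : 1 ≤ s) (hcstar : 0 < cstar) (hcc : cstar ≤ cupper)
    (Sighat : Matrix (Fin p) (Fin p) ℝ)
    (hSighat : ∀ j k : Fin p, Sighat j k =
      if lam₁ ≤ |(∑ i, X i j * X i k) / n| then (∑ i, X i j * X i k) / n else 0)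
    (heigLower : ∀ u : Fin p → ℝ,
      cstar * (∑ j, (u j) ^ 2) ≤ ∑ j, ∑ k, u j * Sighat j k * u k)
    (heigUpper : ∀ u : Fin p → ℝ,
      (∑ j, ∑ k, u j * Sighat j k * u k) ≤ cupper * ∑ j, (u j) ^ 2)
    (K : ℝ) (hK : K = 2 * ξ ^ 2 * (cupper / cstar + 1 / 2))
    (hcond₁ : s * lam₁ * (1 + ξ) ^ 2 ≤ cstar / 2)
    (hcond₂ : s * lam₁ * (1 + K) + lam₁ ≤ cstar / 2)
    (S : Finset (Fin p)) (hS : S.Nonempty) (hScard : (S.card : ℝ) ≤ s)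
    (m : ℕ) (hm : m = ⌈K * (S.card : ℝ)⌉₊) :
    cstar / 2 ≤ phiMinus n p X m S ∧
    phiPlus n p X m S ≤ cupper + cstar / 2 ∧
    ξ ^ 2 * phiPlus n p X m S / (compatFactor n p X ξ S) ^ 2 ≤ K :=
  sparse_eigenvalues_from_thresholded_gram_general n p hn X ξ lam₁ s cstar cupper hξ hlam₁ hcstar
    hcc Sighat hSighat heigLower heigUpper K hK hcond₁ hcond₂ S hS hScard m hm
end
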